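/- arXiv:0704.1543 — 5 statements merged into one kernel-verified Lean document; each statement's English description precedes it below -/
import Mathlib

section
/- Let V be a finite-dimensional real vector space, Ω a nondegenerate alternating bilinear form on V, F ⊆ V a coisotropic subspace (F^⊥ ⊆ F), and U ⊆ V a subspace with dim U + dim F^⊥ ≥ dim V. Set H := U ∩ F. Then U ∩ F^⊥ = {0} if and only if dim H = dim F − dim F^⊥ and the restriction of Ω to H × H is nondegenerate. -/
/-- The orthogonal complement `S^⊥ = {v | Ω(v,s) = 0 for all s ∈ S}` of a subspace `S`
with respect to a bilinear form `Ω` which is alternating (so that this set is a subspace,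
independently of the side on which one pairs). -/
def skewOrth {V : Type*} [AddCommGroup V] [Module ℝ V]
    (Ω : V →ₗ[ℝ] V →ₗ[ℝ] ℝ) (S : Submodule ℝ V) : Submodule ℝ V where
  carrier := {v | ∀ s ∈ S, Ω v s = 0}
  add_mem' := by
    intro a b ha hb s hs
    simp [ha s hs, hb s hs]
  zero_mem' := by
    intro s hs
    simp
  smul_mem' := by
    intro c a ha s hs
    simp [ha s hs]

/-- Let `Ω` be a nondegenerate alternating bilinear form on a finite-dimensional real
vector space `V`, `F` a coisotropic subspace, and `U` a subspace with
`dim U + dim F^⊥ ≥ dim V`.  Setting `H := U ∩ F`, one has `U ∩ F^⊥ = {0}` iff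
`dim H = dim F − dim F^⊥` and the restriction of `Ω` to `H × H` is nondegenerate. -/
theorem stmt_2 (V : Type*) [AddCommGroup V] [Module ℝ V] [FiniteDimensional ℝ V]
    (Ω : V →ₗ[ℝ] V →ₗ[ℝ] ℝ)
    (halt : ∀ v : V, Ω v v = 0)
    (hnd : ∀ v : V, (∀ w : V, Ω v w = 0) → v = 0)
    (F U : Submodule ℝ V)
    (hco : skewOrth Ω F ≤ F)
    (hdim : Module.finrank ℝ V ≤ Module.finrank ℝ U + Module.finrank ℝ (skewOrth Ω F)) :
    (U ⊓ skewOrth Ω F = ⊥) ↔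
      (Module.finrank ℝ ↥(U ⊓ F) =
          Module.finrank ℝ F - Module.finrank ℝ (skewOrth Ω F) ∧
        ∀ v ∈ U ⊓ F, (∀ w ∈ U ⊓ F, Ω v w = 0) → v = 0) := by
  have hskew : ∀ a b : V, Ω a b = -Ω b a := by
    intro a b
    have h := halt (a + b)
    simp only [map_add, LinearMap.add_apply, halt a, halt b] at h
    linarith
  constructor
  · intro h0
    -- dimension count
    have hsum := Submodule.finrank_sup_add_finrank_inf_eq U (skewOrth Ω F)
    rw [h0, finrank_bot] at hsum
    have hle : Module.finrank ℝ ↥(U ⊔ skewOrth Ω F) ≤ Module.finrank ℝ V :=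
      Submodule.finrank_le _
    have htopdim : Module.finrank ℝ ↥(U ⊔ skewOrth Ω F) = Module.finrank ℝ V := by
      omega
    have htop : U ⊔ skewOrth Ω F = ⊤ := Submodule.eq_top_of_finrank_eq htopdim
    have hUF : U ⊔ F = ⊤ := by
      rw [eq_top_iff, ← htop]
      exact sup_le_sup_left hco U
    have hsum2 := Submodule.finrank_sup_add_finrank_inf_eq U F
    rw [hUF, finrank_top] at hsum2
    have hFle : Module.finrank ℝ (skewOrth Ω F) ≤ Module.finrank ℝ F :=
      Submodule.finrank_mono hco
    refine ⟨by omega, ?_⟩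
    -- nondegeneracy on H
    intro v hv hvw
    have hvU : v ∈ U := hv.1
    have hvF : v ∈ F := hv.2
    have hvorth : v ∈ skewOrth Ω F := by
      intro s hs
      have hsmem : s ∈ U ⊔ skewOrth Ω F := htop ▸ Submodule.mem_top
      obtain ⟨u, hu, p, hp, rfl⟩ := Submodule.mem_sup.mp hsmem
      have huF : u ∈ F := by
        have : (u + p) - p ∈ F := Submodule.sub_mem _ hs (hco hp)
        simpa using this
      have h1 : Ω v u = 0 := hvw u ⟨hu, huF⟩
      have h2 : Ω v p = 0 := by rw [hskew v p, hp v hvF, neg_zero]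
      simp [h1, h2]
    have : v ∈ U ⊓ skewOrth Ω F := ⟨hvU, hvorth⟩
    rw [h0] at this
    simpa using this
  · rintro ⟨-, hndH⟩
    rw [eq_bot_iff]
    intro v hv
    have hvU : v ∈ U := hv.1
    have hvO : v ∈ skewOrth Ω F := hv.2
    have : v = 0 := hndH v ⟨hvU, hco hvO⟩ (fun w hw => hvO w hw.2)
    simpa using this
end

section
/- The set {(ω, v₁·(sin ω)/ω, −v₁·(cos ω − 1)/ω) : ω ∈ (−π,π), ω ≠ 0, v₁ ∈ ℝ} ∪ {(0, v₁, 0) : v₁ ∈ ℝ} in ℝ³ equals the set {(θ,x,y) ∈ ℝ³ : −π < θ < π, θ ≠ 0, (1 − cos θ)·x − y·sin θ = 0} ∪ {(0,x,0) : x ∈ ℝ}. -/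
/-- The image under the `SE(2)` exponential map of the set
`{(ω,v₁,0) : ω ∈ (−π,π)}` equals the explicit constraint set of the discrete
Chaplygin sleigh. -/
theorem stmt_12 :
    ({p : ℝ × ℝ × ℝ | ∃ ω v₁ : ℝ, ω ∈ Set.Ioo (-Real.pi) Real.pi ∧ ω ≠ 0 ∧
        p = (ω, v₁ * (Real.sin ω / ω), -(v₁ * ((Real.cos ω - 1) / ω)))} ∪
      {p : ℝ × ℝ × ℝ | ∃ v₁ : ℝ, p = (0, v₁, 0)}) =
    ({p : ℝ × ℝ × ℝ | -Real.pi < p.1 ∧ p.1 < Real.pi ∧ p.1 ≠ 0 ∧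
        (1 - Real.cos p.1) * p.2.1 - p.2.2 * Real.sin p.1 = 0} ∪
      {p : ℝ × ℝ × ℝ | ∃ x : ℝ, p = (0, x, 0)}) := by
  ext ⟨θ, x, y⟩
  simp only [Set.mem_union, Set.mem_setOf_eq, Set.mem_Ioo, Prod.mk.injEq]
  constructor
  · rintro (⟨ω, v₁, ⟨h1, h2⟩, hω, rfl, rfl, rfl⟩ | ⟨v₁, rfl, rfl, rfl⟩)
    · left
      refine ⟨h1, h2, hω, ?_⟩
      field_simp
      ring
    · right
      exact ⟨x, rfl, rfl, rfl⟩
  · rintro (⟨h1, h2, hθ, heq⟩ | ⟨v₁, rfl, rfl, rfl⟩)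
    · left
      have hs : Real.sin θ ≠ 0 := by
        intro h
        rcases Real.sin_eq_zero_iff_of_lt_of_lt h1 h2 |>.mp h with h
        exact hθ h
      refine ⟨θ, x * θ / Real.sin θ, ⟨h1, h2⟩, hθ, rfl, ?_, ?_⟩
      · field_simp
      · have : y * Real.sin θ = (1 - Real.cos θ) * x := by linarith
        field_simp
        nlinarith [this]
    · right
      exact ⟨x, rfl, rfl, rfl⟩
end

section
/- Let h, r, m, I, Ω ∈ ℝ with h ≠ 0, r ≠ 0 and I + m·r² ≠ 0, let x₀,x₁,x₂,y₀,y₁,y₂ ∈ ℝ, and let W₁, W₂ ∈ M₃(ℝ). Assume: (a) r·m·(x₂ − 2x₁ + x₀)/h² + (I/(2h²))·Tr((W₁ − W₂)E₂) = 0; (b) r·m·(y₂ − 2y₁ + y₀)/h² − (I/(2h²))·Tr((W₁ − W₂)E₁) = 0; (c) (x₁ − x₀)/h + (r/(2h))·Tr(W₁E₂) + Ω·(y₁ + y₀)/2 = 0; (d) (y₁ − y₀)/h − (r/(2h))·Tr(W₁E₁) − Ω·(x₁ + x₀)/2 = 0; (e) (x₂ − x₁)/h + (r/(2h))·Tr(W₂E₂)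 + Ω·(y₂ + y₁)/2 = 0; (f) (y₂ − y₁)/h − (r/(2h))·Tr(W₂E₁) − Ω·(x₂ + x₁)/2 = 0. Then (x₂ − 2x₁ + x₀)/h² + (I·Ω/(I + m·r²))·(y₂ − y₀)/(2h) = 0 and (y₂ − 2y₁ + y₀)/h² − (I·Ω/(I + m·r²))·(x₂ − x₀)/(2h) = 0. -/
/-!
Subtracting the rolling constraint at the first step from the one at the second expresses
`r / (2h) · (Tr (W₁E₂) - Tr (W₂E₂))`, the only place where the rotational variables enter
the Euler–Lagrange equation (a), through the contact point; substituting into `r` times that equation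
leaves `(I + m r²)` times the claimed difference equation. The `y`-equation is the
`x`-equation with `x ↔ y`, `Ω ↦ -Ω` and the traces negated.
-/

theorem second_difference_eq_of_rolling_constraints {K : Type*} [Field K]
    {h r m I Ω x₀ x₁ x₂ y₀ y₁ y₂ t₁ t₂ : K} (hIm : I + m * r ^ 2 ≠ 0)
    (hEL : r * m * (x₂ - 2 * x₁ + x₀) / h ^ 2 + (I / (2 * h ^ 2)) * (t₁ - t₂) = 0)
    (h₁ : (x₁ - x₀) / h + (r / (2 * h)) * t₁ + Ω * (y₁ + y₀) / 2 = 0)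
    (h₂ : (x₂ - x₁) / h + (r / (2 * h)) * t₂ + Ω * (y₂ + y₁) / 2 = 0) :
    (x₂ - 2 * x₁ + x₀) / h ^ 2 + (I * Ω / (I + m * r ^ 2)) * (y₂ - y₀) / (2 * h) = 0 := by
  have hscaled : (I + m * r ^ 2) * ((x₂ - 2 * x₁ + x₀) / h ^ 2)
      + I * Ω * (y₂ - y₀) / (2 * h) = 0 := by
    linear_combination r * hEL - I / h * (h₁ - h₂)
  linear_combination (I + m * r ^ 2)⁻¹ * hscaled
    - (x₂ - 2 * x₁ + x₀) / h ^ 2 * mul_inv_cancel₀ hIm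

theorem stmt_13_general (h r m I Ω : ℝ) (hIm : I + m * r ^ 2 ≠ 0)
    (x₀ x₁ x₂ y₀ y₁ y₂ : ℝ)
    (W₁ W₂ : Matrix (Fin 3) (Fin 3) ℝ)
    (E₁ E₂ : Matrix (Fin 3) (Fin 3) ℝ)
    (ha : r * m * (x₂ - 2 * x₁ + x₀) / h ^ 2 + (I / (2 * h ^ 2)) * ((W₁ - W₂) * E₂).trace = 0)
    (hb : r * m * (y₂ - 2 * y₁ + y₀) / h ^ 2 - (I / (2 * h ^ 2)) * ((W₁ - W₂) * E₁).trace = 0)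
    (hc : (x₁ - x₀) / h + (r / (2 * h)) * (W₁ * E₂).trace + Ω * (y₁ + y₀) / 2 = 0)
    (hd : (y₁ - y₀) / h - (r / (2 * h)) * (W₁ * E₁).trace - Ω * (x₁ + x₀) / 2 = 0)
    (he : (x₂ - x₁) / h + (r / (2 * h)) * (W₂ * E₂).trace + Ω * (y₂ + y₁) / 2 = 0)
    (hf : (y₂ - y₁) / h - (r / (2 * h)) * (W₂ * E₁).trace - Ω * (x₂ + x₁) / 2 = 0) :
    (x₂ - 2 * x₁ + x₀) / h ^ 2 + (I * Ω / (I + m * r ^ 2)) * (y₂ - y₀) / (2 * h) = 0 ∧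
    (y₂ - 2 * y₁ + y₀) / h ^ 2 - (I * Ω / (I + m * r ^ 2)) * (x₂ - x₀) / (2 * h) = 0 := by
  rw [Matrix.sub_mul, Matrix.trace_sub] at ha hb
  refine ⟨second_difference_eq_of_rolling_constraints hIm ha hc he, ?_⟩
  have hy := second_difference_eq_of_rolling_constraints (h := h) (Ω := -Ω)
    (x₀ := y₀) (x₁ := y₁) (x₂ := y₂) (y₀ := x₀) (y₁ := x₁) (y₂ := x₂)
    (t₁ := -(W₁ * E₁).trace) (t₂ := -(W₂ * E₁).trace) hIm
    (by linear_combination hb) (by linear_combination hd) (by linear_combination hf)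
  linear_combination hy

/-- For the discretized rolling ball on a rotating table: the discrete nonholonomic
Euler-Lagrange equations (a)–(b) together with the discrete rolling constraints
(c)–(f) at two consecutive steps imply the simplified pair of difference equations for
the contact point. -/
theorem stmt_13 (h r m I Ω : ℝ) (hh : h ≠ 0) (hr : r ≠ 0) (hIm : I + m * r ^ 2 ≠ 0)
    (x₀ x₁ x₂ y₀ y₁ y₂ : ℝ)
    (W₁ W₂ : Matrix (Fin 3) (Fin 3) ℝ)
    (E₁ E₂ : Matrix (Fin 3) (Fin 3) ℝ)
    (hE₁ : E₁ = !![0, 0, 0; 0, 0, -1; 0, 1, 0])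
    (hE₂ : E₂ = !![0, 0, 1; 0, 0, 0; -1, 0, 0])
    (ha : r * m * (x₂ - 2 * x₁ + x₀) / h ^ 2 + (I / (2 * h ^ 2)) * ((W₁ - W₂) * E₂).trace = 0)
    (hb : r * m * (y₂ - 2 * y₁ + y₀) / h ^ 2 - (I / (2 * h ^ 2)) * ((W₁ - W₂) * E₁).trace = 0)
    (hc : (x₁ - x₀) / h + (r / (2 * h)) * (W₁ * E₂).trace + Ω * (y₁ + y₀) / 2 = 0)
    (hd : (y₁ - y₀) / h - (r / (2 * h)) * (W₁ * E₁).trace - Ω * (x₁ + x₀) / 2 = 0)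
    (he : (x₂ - x₁) / h + (r / (2 * h)) * (W₂ * E₂).trace + Ω * (y₂ + y₁) / 2 = 0)
    (hf : (y₂ - y₁) / h - (r / (2 * h)) * (W₂ * E₁).trace - Ω * (x₂ + x₁) / 2 = 0) :
    (x₂ - 2 * x₁ + x₀) / h ^ 2 + (I * Ω / (I + m * r ^ 2)) * (y₂ - y₀) / (2 * h) = 0 ∧
    (y₂ - 2 * y₁ + y₀) / h ^ 2 - (I * Ω / (I + m * r ^ 2)) * (x₂ - x₀) / (2 * h) = 0 :=
  stmt_13_general h r m I Ω hIm x₀ x₁ x₂ y₀ y₁ y₂ W₁ W₂ E₁ E₂ ha hb hc hd he hf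
end

section
/- Let h ≠ 0 and α ∈ ℝ, and let x, y : ℕ → ℝ be sequences such that for every k: (x(k+2) − 2x(k+1) + x(k))/h² + α·(y(k+2) − y(k))/(2h) = 0 and (y(k+2) − 2y(k+1) + y(k))/h² − α·(x(k+2) − x(k))/(2h) = 0. Define u(k) = (x(k+1) − x(k))/h and v(k) = (y(k+1) − y(k))/h. Then for every k, [u(k+1), v(k+1)]ᵀ = A·[u(k), v(k)]ᵀ, where A = (1/(4 + α²h²))·[[4 − α²h², −4αh], [4αh, 4 − α²h²]]. -/
open Matrix

/-! In terms of the difference quotients `u k`, `v k`, the two second-order equations become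
the implicit midpoint rule for the rotation field `u' = -α v`, `v' = α u`:
`2 (w' - w) = α h J (w' + w)` with `J` the quarter turn. Solving this 2 × 2 linear system for `w'`
gives the Cayley transform `(2 - α h J)⁻¹ (2 + α h J)` of `J`, which is the matrix `A`. -/

theorem vec_eq_cayley_mulVec_of_midpoint {K : Type*} [Field K] {α h u v u' v' : K}
    (hd : 4 + α ^ 2 * h ^ 2 ≠ 0)
    (hu : 2 * (u' - u) + α * h * (v' + v) = 0) (hv : 2 * (v' - v) - α * h * (u' + u) = 0) :
    ![u', v'] =
      ((1 / (4 + α ^ 2 * h ^ 2)) •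
          !![4 - α ^ 2 * h ^ 2, -(4 * α * h); 4 * α * h, 4 - α ^ 2 * h ^ 2] :
        Matrix (Fin 2) (Fin 2) K).mulVec ![u, v] := by
  ext i
  fin_cases i <;>
    simp only [Fin.zero_eta, Fin.mk_one, Fin.isValue, mulVec, dotProduct, Fin.sum_univ_two,
      Matrix.smul_apply, of_apply, cons_val', cons_val_zero, cons_val_one, cons_val_fin_one,
      smul_eq_mul, one_div, mul_neg, neg_mul] <;>
    field_simp
  · linear_combination 2 * hu - α * h * hv
  · linear_combination 2 * hv + α * h * hu

/-- For sequences satisfying the simplified discrete nonholonomic equations of the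
rolling ball on a rotating table, the discrete velocities `(u_k, v_k)` evolve by
multiplication by the rotation matrix `A`. -/
theorem stmt_15 (h α : ℝ) (hh : h ≠ 0) (x y : ℕ → ℝ)
    (hx : ∀ k : ℕ,
      (x (k + 2) - 2 * x (k + 1) + x k) / h ^ 2 + α * (y (k + 2) - y k) / (2 * h) = 0)
    (hy : ∀ k : ℕ,
      (y (k + 2) - 2 * y (k + 1) + y k) / h ^ 2 - α * (x (k + 2) - x k) / (2 * h) = 0)
    (u v : ℕ → ℝ)
    (hu : ∀ k : ℕ, u k = (x (k + 1) - x k) / h)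
    (hv : ∀ k : ℕ, v k = (y (k + 1) - y k) / h) :
    ∀ k : ℕ,
      ![u (k + 1), v (k + 1)] =
        ((1 / (4 + α ^ 2 * h ^ 2)) •
            !![4 - α ^ 2 * h ^ 2, -(4 * α * h); 4 * α * h, 4 - α ^ 2 * h ^ 2] :
          Matrix (Fin 2) (Fin 2) ℝ).mulVec ![u k, v k] := by
  intro k
  apply vec_eq_cayley_mulVec_of_midpoint (by positivity)
  · have hxk := hx k
    rw [hu, hu, hv, hv]
    field_simp at hxk ⊢
    linear_combination hxk
  · have hyk := hy k
    rw [hu, hu, hv, hv]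
    field_simp at hyk ⊢
    linear_combination hyk
end

section
/- Let Q be a finite-dimensional real normed space, L : Q × Q → ℝ a differentiable function with L(q,q') = L(q',q) for all q, q' ∈ Q, M ⊆ Q × Q a subset with the property that (q,q') ∈ M implies (q',q) ∈ M, and D : Q → (set of linear subspaces of Q) an arbitrary assignment. Suppose q₀, q₁, q₂ ∈ Q satisfy (q₀,q₁) ∈ M, (q₁,q₂) ∈ M, and (D₂L(q₀,q₁) + D₁L(q₁,q₂))(v) = 0 for every v ∈ D(q₁), where D₁, D₂ denote the partial Fréchet derivatives in the first and second argument. Then (q₂,q₁) ∈ M, (q₁,q₀) ∈ M, and (D₂L(q₂,q₁) + D₁L(q₁,q₀))(v) = 0 for every v ∈ D(q₁). -/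
/-- Reversibility of solutions on the pair groupoid: if `L` is a symmetric
differentiable discrete Lagrangian, `M` a symmetric constraint set, and
`((q₀,q₁),(q₁,q₂))` a solution of the discrete nonholonomic Euler-Lagrange equations
(with both pairs in `M` and `D₂L(q₀,q₁) + D₁L(q₁,q₂)` vanishing on `D(q₁)`), then
`((q₂,q₁),(q₁,q₀))` is also a solution. -/
theorem stmt_18 (Q : Type*) [NormedAddCommGroup Q] [NormedSpace ℝ Q]
    [FiniteDimensional ℝ Q]
    (L : Q × Q → ℝ) (hdiff : Differentiable ℝ L)
    (hsym : ∀ q q' : Q, L (q, q') = L (q', q))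
    (M : Set (Q × Q)) (hM : ∀ q q' : Q, (q, q') ∈ M → (q', q) ∈ M)
    (D : Q → Submodule ℝ Q)
    (q₀ q₁ q₂ : Q)
    (h01 : (q₀, q₁) ∈ M) (h12 : (q₁, q₂) ∈ M)
    (heq : ∀ v ∈ D q₁,
      fderiv ℝ (fun q => L (q₀, q)) q₁ v + fderiv ℝ (fun q => L (q, q₂)) q₁ v = 0) :
    (q₂, q₁) ∈ M ∧ (q₁, q₀) ∈ M ∧
      ∀ v ∈ D q₁,
        fderiv ℝ (fun q => L (q₂, q)) q₁ v + fderiv ℝ (fun q => L (q, q₀)) q₁ v = 0 := by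
  refine ⟨hM _ _ h12, hM _ _ h01, fun v hv => ?_⟩
  have e1 : (fun q => L (q₂, q)) = fun q => L (q, q₂) := funext fun q => hsym q₂ q
  have e2 : (fun q => L (q, q₀)) = fun q => L (q₀, q) := funext fun q => hsym q q₀
  rw [e1, e2, add_comm]
  exact heq v hv
end
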